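/- Let f : ℝ → ℝ be nonnegative with √f ∈ H^s(ℝ) for some s > 2, and let g denote the Fourier transform of √f. Then ∫_0^∞ ∫_m^∞ |g(ω + ω')|² ω'³ dω' dω < ∞ for any m > 0. -/

import Mathlib

/-!
Substituting `v = ω + ω'` maps the quadrant `{ω > 0, ω' > m}` onto the wedge `m < ω' < v`.
For fixed `v`, integrating `ω'³` over `(m, v)` gives at most `v³ (v - m) ≤ v⁴ ≤ (1 + v²)^s`,
so by Tonelli the double integral is bounded by the weighted `L²` norm of `g`.
-/

open MeasureTheory Set

lemma pow_four_le_one_add_sq_rpow {s : ℝ} (hs : 2 ≤ s) (u : ℝ) : u ^ 4 ≤ (1 + u ^ 2) ^ s :=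
  calc u ^ 4 ≤ (1 + u ^ 2) ^ (2 : ℝ) := by
        rw [Real.rpow_two]; nlinarith [sq_nonneg u]
    _ ≤ (1 + u ^ 2) ^ s := Real.rpow_le_rpow_of_exponent_le (by nlinarith [sq_nonneg u]) hs

lemma aestronglyMeasurable_of_continuous_mul {α : Type*} [TopologicalSpace α]
    [MeasurableSpace α] [OpensMeasurableSpace α] {μ : Measure α} {w φ : α → ℝ}
    (hw : Continuous w) (hw₀ : ∀ x, w x ≠ 0)
    (h : AEStronglyMeasurable (fun x => w x * φ x) μ) : AEStronglyMeasurable φ μ :=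
  ((hw.inv₀ hw₀).aestronglyMeasurable.mul h).congr <|
    Filter.Eventually.of_forall fun x => by simp [hw₀ x]

section Wedge

def wedge (m : ℝ) : Set (ℝ × ℝ) := {q | m < q.2 ∧ q.2 < q.1}

lemma measurableSet_wedge (m : ℝ) : MeasurableSet (wedge m) :=
  (measurableSet_lt measurable_const measurable_snd).inter
    (measurableSet_lt measurable_snd measurable_fst)

variable {φ : ℝ → ℝ} {m : ℝ} {n : ℕ}

lemma lintegral_enorm_indicator_wedge_le (hm : 0 ≤ m) (v : ℝ) :
    ∫⁻ u, ‖(wedge m).indicator (fun q => φ q.1 * q.2 ^ n) (v, u)‖ₑ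
      ≤ ‖(Ioi m).indicator (fun v => v ^ (n + 1) * φ v) v‖ₑ := by
  calc _ ≤ ∫⁻ u, (Ioo m v).indicator (fun _ => ‖v ^ n * φ v‖ₑ) u :=
      lintegral_mono fun u => by
        by_cases hu : m < u ∧ u < v
        · rw [indicator_of_mem (show (v, u) ∈ wedge m from hu),
            indicator_of_mem (show u ∈ Ioo m v from hu), enorm_le_iff_norm_le, norm_mul,
            norm_mul, mul_comm, norm_pow, norm_pow]
          gcongr
          rw [Real.norm_of_nonneg (by linarith), Real.norm_of_nonneg (by linarith)]
          exact hu.2.le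
        · simp [indicator_of_notMem (show (v, u) ∉ wedge m from hu)]
    _ = ‖v ^ n * φ v‖ₑ * ENNReal.ofReal (v - m) := by
        rw [lintegral_indicator_const measurableSet_Ioo, Real.volume_Ioo]
    _ ≤ _ := by
        by_cases hv : m < v
        · rw [indicator_of_mem (show v ∈ Ioi m from hv), pow_succ, mul_right_comm, enorm_mul _ v]
          gcongr
          rw [Real.enorm_eq_ofReal_abs]
          exact ENNReal.ofReal_le_ofReal ((sub_le_self v hm).trans (le_abs_self v))
        · simp [ENNReal.ofReal_of_nonpos (sub_nonpos.2 (not_lt.1 hv))]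

lemma integrable_indicator_wedge (hm : 0 ≤ m) (hφ : AEStronglyMeasurable φ)
    (hint : IntegrableOn (fun v => v ^ (n + 1) * φ v) (Ioi m)) :
    Integrable ((wedge m).indicator fun q => φ q.1 * q.2 ^ n) (volume.prod volume) := by
  refine ⟨?_, ?_⟩
  · exact (hφ.comp_fst.mul (continuous_snd.pow n).aestronglyMeasurable).indicator
      (measurableSet_wedge m)
  · rw [hasFiniteIntegral_iff_enorm]
    calc _ ≤ _ := lintegral_prod_le _
      _ ≤ ∫⁻ v, ‖(Ioi m).indicator (fun v => v ^ (n + 1) * φ v) v‖ₑ :=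
          lintegral_mono (lintegral_enorm_indicator_wedge_le hm)
      _ < ⊤ := by
          simpa only [enorm_indicator_eq_indicator_enorm, lintegral_indicator measurableSet_Ioi,
            ← hasFiniteIntegral_iff_enorm] using hint.hasFiniteIntegral

lemma integrableOn_comp_add_mul_pow (hm : 0 ≤ m) (hφ : AEStronglyMeasurable φ)
    (hint : IntegrableOn (fun v => v ^ (n + 1) * φ v) (Ioi m)) :
    IntegrableOn (fun p : ℝ × ℝ => φ (p.1 + p.2) * p.2 ^ n) (Ioi 0 ×ˢ Ioi m) := by
  have hpre : Ioi 0 ×ˢ Ioi m = (fun p : ℝ × ℝ => (p.1 + p.2, p.2)) ⁻¹' wedge m := by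
    ext ⟨a, u⟩
    simp only [wedge, mem_prod, mem_Ioi, mem_preimage, mem_ofPred_eq]
    constructor <;> rintro ⟨h₁, h₂⟩ <;> constructor <;> linarith
  refine (integrable_indicator_iff (measurableSet_Ioi.prod measurableSet_Ioi)).1 ?_
  rw [Measure.volume_eq_prod, hpre]
  exact (measurePreserving_add_prod volume volume).integrable_comp_of_integrable
    (integrable_indicator_wedge hm hφ hint)

end Wedge

theorem stmt_7_general (s : ℝ) (hs : 2 < s)
    (g : ℝ → ℂ)
    (hSobolev : Integrable (fun ξ : ℝ => (1 + ξ ^ 2) ^ s * ‖g ξ‖ ^ 2) volume)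
    (m : ℝ) (hm : 0 < m) :
    IntegrableOn (fun p : ℝ × ℝ => ‖g (p.1 + p.2)‖ ^ 2 * p.2 ^ 3)
      (Set.Ioi (0 : ℝ) ×ˢ Set.Ioi m) volume := by
  have hweight : Continuous fun ξ : ℝ => (1 + ξ ^ 2) ^ s :=
    (by fun_prop : Continuous fun ξ : ℝ => 1 + ξ ^ 2).rpow_const fun ξ => Or.inl (by positivity)
  have hφ : AEStronglyMeasurable (fun ξ => ‖g ξ‖ ^ 2) :=
    aestronglyMeasurable_of_continuous_mul hweight
      (fun ξ => (Real.rpow_pos_of_pos (by positivity) s).ne') hSobolev.1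
  have hint : Integrable (fun v : ℝ => v ^ 4 * ‖g v‖ ^ 2) :=
    hSobolev.mono ((continuous_pow 4).aestronglyMeasurable.mul hφ) <|
      Filter.Eventually.of_forall fun v => by
        rw [Real.norm_of_nonneg (by positivity), Real.norm_of_nonneg (by positivity)]
        exact mul_le_mul_of_nonneg_right (pow_four_le_one_add_sq_rpow hs.le v) (by positivity)
  exact integrableOn_comp_add_mul_pow hm.le hφ hint.integrableOn

/-- if `f ≥ 0`, `√f ∈ H^s(ℝ)` for some `s > 2` (expressed via the
weighted L² condition on the Fourier transform `g` of `√f`), then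
`∫_0^∞ ∫_m^∞ |g(ω + ω')|² ω'³ dω' dω < ∞` for any `m > 0`. -/
theorem stmt_7 (f : ℝ → ℝ) (hf : ∀ x, 0 ≤ f x) (s : ℝ) (hs : 2 < s)
    (g : ℝ → ℂ)
    (hg : ∀ ξ, g ξ = ∫ t : ℝ, Complex.exp (-Complex.I * ξ * t) * (Real.sqrt (f t) : ℂ))
    (hSobolev : Integrable (fun ξ : ℝ => (1 + ξ ^ 2) ^ s * ‖g ξ‖ ^ 2) volume)
    (m : ℝ) (hm : 0 < m) :
    IntegrableOn (fun p : ℝ × ℝ => ‖g (p.1 + p.2)‖ ^ 2 * p.2 ^ 3)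
      (Set.Ioi (0 : ℝ) ×ˢ Set.Ioi m) volume :=
  stmt_7_general s hs g hSobolev m hm
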